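/- Let π be a policy, π̃ another policy, ω ∈ [0,1], and define π' = (1-ω)π + ωπ̃. Let Q : S × A → ℝ and χ = ‖H Q − H_{π̃} Q‖∞. Then ‖Q* − Q^{π'}‖∞² ≤ (1 − ω(1−γ)) ‖Q* − Q^{π}‖∞² + (6ω/(1−γ)³) ‖Q − Q^{π}‖∞² + (5ω/(1−γ)³) χ². -/

import Mathlib

noncomputable section

/-- A policy assigns to each state a probability distribution over actions. -/
def IsPolicy {S A : Type*} [Fintype A] (π : S → A → ℝ) : Prop :=
  (∀ s a, 0 ≤ π s a) ∧ ∀ s, ∑ a, π s a = 1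

/-- A transition kernel assigns to each state-action pair a probability distribution over states. -/
def IsKernel {S A : Type*} [Fintype S] (p : S → A → S → ℝ) : Prop :=
  (∀ s a s', 0 ≤ p s a s') ∧ ∀ s a, ∑ s', p s a s' = 1

/-- Sup norm on `S × A → ℝ` (functions `S → A → ℝ`). -/
def supNorm {S A : Type*} [Fintype S] [Fintype A] [Nonempty S] [Nonempty A]
    (Q : S → A → ℝ) : ℝ :=
  Finset.univ.sup' Finset.univ_nonempty (fun sa : S × A => |Q sa.1 sa.2|)

/-- Total variation distance between two distributions on a finite set. -/
def dTV {Ω : Type*} [Fintype Ω] (p₁ p₂ : Ω → ℝ) : ℝ :=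
  (∑ x, |p₁ x - p₂ x|) / 2

/-- Weighted ℓ₂ norm with weights ν. -/
def nuNorm {S A : Type*} [Fintype S] [Fintype A] (ν : S → A → ℝ) (Q : S → A → ℝ) : ℝ :=
  Real.sqrt (∑ s, ∑ a, ν s a * (Q s a) ^ 2)

/-- Weighted ℓ₂ inner product with weights ν. -/
def nuInner {S A : Type*} [Fintype S] [Fintype A] (ν : S → A → ℝ) (Q₁ Q₂ : S → A → ℝ) : ℝ :=
  ∑ s, ∑ a, ν s a * Q₁ s a * Q₂ s a

/-- Bellman operator associated with a policy π. -/
def bellman {S A : Type*} [Fintype S] [Fintype A]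
    (p : S → A → S → ℝ) (R : S → A → ℝ) (γ : ℝ) (π : S → A → ℝ)
    (Q : S → A → ℝ) : S → A → ℝ :=
  fun s a => R s a + γ * ∑ s', p s a s' * ∑ a', π s' a' * Q s' a'

/-- Bellman optimality operator. -/
def bellmanOpt {S A : Type*} [Fintype S] [Fintype A] [Nonempty A]
    (p : S → A → S → ℝ) (R : S → A → ℝ) (γ : ℝ)
    (Q : S → A → ℝ) : S → A → ℝ :=
  fun s a => R s a + γ * ∑ s', p s a s' *
    Finset.univ.sup' Finset.univ_nonempty (fun a' => Q s' a')

/-- Expected operator F̄(Q,π) = (I − D)Q + D H_π Q, where D has diagonal entries μ_b(s)π_b(a|s). -/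
def Fbar {S A : Type*} [Fintype S] [Fintype A]
    (p : S → A → S → ℝ) (R : S → A → ℝ) (γ : ℝ)
    (μb : S → ℝ) (πb : S → A → ℝ) (π : S → A → ℝ) (Q : S → A → ℝ) : S → A → ℝ :=
  fun s a => (1 - μb s * πb s a) * Q s a + μb s * πb s a * bellman p R γ π Q s a

/-- Importance-sampling TD operator, for y = ((s₁,a₁),(s₂,a₂)). -/
def FIS {S A : Type*} [Fintype S] [Fintype A] [DecidableEq S] [DecidableEq A]
    (R : S → A → ℝ) (γ : ℝ) (πb : S → A → ℝ)
    (Q : S → A → ℝ) (y : (S × A) × S × A) (π : S → A → ℝ) : S → A → ℝ :=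
  fun s a => if (s, a) = y.1 then
      R y.1.1 y.1.2 + γ * (π y.2.1 y.2.2 / πb y.2.1 y.2.2) * Q y.2.1 y.2.2
    else Q s a

/-- Expected-TD operator, for u = (s₁,a₁,s₂). -/
def FETD {S A : Type*} [Fintype S] [Fintype A] [DecidableEq S] [DecidableEq A]
    (R : S → A → ℝ) (γ : ℝ)
    (Q : S → A → ℝ) (u : S × A × S) (π : S → A → ℝ) : S → A → ℝ :=
  fun s a => if (s, a) = (u.1, u.2.1) then
      R u.1 u.2.1 + γ * ∑ a', π u.2.2 a' * Q u.2.2 a'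
    else Q s a

/-- State transition matrix induced by a policy. -/
def Pmat {S A : Type*} [Fintype A] (p : S → A → S → ℝ) (π : S → A → ℝ) : Matrix S S ℝ :=
  Matrix.of fun s s' => ∑ a, π s a * p s a s'

end

/-
The mixed policy π' moves a fraction ω of π towards π̃. Write Δ = Q^{π'} − Q^π. Because
H_{π'} Q^π = (1 - ω) Q^π + ω H_{π̃} Q^π, the difference satisfies
Δ = (H_{π'} Q^{π'} − H_{π'} Q^π) + ω (H_{π̃} Q^π − Q^π), and H_{π̃} Q^π is within
κ = 2γ‖Q − Q^π‖ + χ of H Q^π ≥ Q^π. The first term is at least γ · min Δ, so min Δ ≥ −ωκ/(1−γ),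
and then Δ ≥ ω (H Q^π − Q^π) − ωκ/(1−γ). Since H Q^π − Q^π ≥ (Q* − Q^π) − γ‖Q* − Q^π‖ and
Q^{π'} ≤ Q*, this gives the linear bound
‖Q* − Q^{π'}‖ ≤ (1 − ω(1−γ)) ‖Q* − Q^π‖ + ωκ/(1−γ).
Squaring it with Jensen's inequality for x ↦ x², with weights 1 − ω(1−γ) and ω(1−γ), yields
the claim.
-/

open Finset Function

lemma sq_convexComb_le {t x y : ℝ} (ht0 : 0 ≤ t) (ht1 : t ≤ 1) :
    (t * x + (1 - t) * y) ^ 2 ≤ t * x ^ 2 + (1 - t) * y ^ 2 := by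
  nlinarith [mul_nonneg (mul_nonneg ht0 (sub_nonneg.2 ht1)) (sq_nonneg (x - y))]

lemma sq_drift_bound_le {γ ω D E χ : ℝ} (hγ0 : 0 ≤ γ) (hγ1 : γ < 1) (hω0 : 0 ≤ ω)
    (hω1 : ω ≤ 1) (hE : 0 ≤ E) (hχ : 0 ≤ χ) :
    ((1 - ω * (1 - γ)) * D + ω * (2 * γ * E + χ) / (1 - γ)) ^ 2
      ≤ (1 - ω * (1 - γ)) * D ^ 2 + 6 * ω / (1 - γ) ^ 3 * E ^ 2
        + 5 * ω / (1 - γ) ^ 3 * χ ^ 2 := by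
  set δ := 1 - γ
  set κ := 2 * γ * E + χ
  have hδ : 0 < δ := by linarith
  have hκ : κ ^ 2 ≤ 6 * E ^ 2 + 5 * χ ^ 2 := by
    have hκle : κ ≤ 2 * E + χ := by nlinarith
    nlinarith [pow_le_pow_left₀ (by positivity : 0 ≤ κ) hκle 2, sq_nonneg (E - χ)]
  have hJensen := sq_convexComb_le (x := D) (y := κ / δ ^ 2)
    (sub_nonneg.2 (by nlinarith : ω * δ ≤ 1)) (by nlinarith : 1 - ω * δ ≤ 1)
  calc ((1 - ω * δ) * D + ω * κ / δ) ^ 2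
      = ((1 - ω * δ) * D + (1 - (1 - ω * δ)) * (κ / δ ^ 2)) ^ 2 := by
        field_simp
        ring
    _ ≤ (1 - ω * δ) * D ^ 2 + (1 - (1 - ω * δ)) * (κ / δ ^ 2) ^ 2 := hJensen
    _ = (1 - ω * δ) * D ^ 2 + ω / δ ^ 3 * κ ^ 2 := by
        field_simp
        ring
    _ ≤ (1 - ω * δ) * D ^ 2 + ω / δ ^ 3 * (6 * E ^ 2 + 5 * χ ^ 2) := by gcongr
    _ = _ := by ring

lemma sum_mul_le_of_forall_le {ι : Type*} [Fintype ι] {w f : ι → ℝ} {c : ℝ}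
    (hw : ∀ i, 0 ≤ w i) (hw1 : ∑ i, w i = 1) (hf : ∀ i, f i ≤ c) : ∑ i, w i * f i ≤ c :=
  calc ∑ i, w i * f i ≤ ∑ i, w i * c :=
        sum_le_sum fun i _ => mul_le_mul_of_nonneg_left (hf i) (hw i)
    _ = c := by rw [← sum_mul, hw1, one_mul]

lemma le_sum_mul_of_forall_le {ι : Type*} [Fintype ι] {w f : ι → ℝ} {c : ℝ}
    (hw : ∀ i, 0 ≤ w i) (hw1 : ∑ i, w i = 1) (hf : ∀ i, c ≤ f i) : c ≤ ∑ i, w i * f i :=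
  calc c = ∑ i, w i * c := by rw [← sum_mul, hw1, one_mul]
    _ ≤ ∑ i, w i * f i := sum_le_sum fun i _ => mul_le_mul_of_nonneg_left (hf i) (hw i)

lemma IsPolicy.mix {S A : Type*} [Fintype A] {π π' : S → A → ℝ} (hπ : IsPolicy π)
    (hπ' : IsPolicy π') {ω : ℝ} (hω0 : 0 ≤ ω) (hω1 : ω ≤ 1) :
    IsPolicy (fun s a => (1 - ω) * π s a + ω * π' s a) := by
  refine ⟨fun s a => by nlinarith [hπ.1 s a, hπ'.1 s a], fun s => ?_⟩
  rw [sum_add_distrib, ← mul_sum, ← mul_sum, hπ.2 s, hπ'.2 s]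
  ring

section MDP

variable {S A : Type*} [Fintype S] [Fintype A]

section supNorm

variable [Nonempty S] [Nonempty A]

lemma abs_le_supNorm (Q : S → A → ℝ) (s : S) (a : A) : |Q s a| ≤ supNorm Q :=
  le_sup' (fun sa : S × A => |Q sa.1 sa.2|) (mem_univ (s, a))

lemma le_supNorm (Q : S → A → ℝ) (s : S) (a : A) : Q s a ≤ supNorm Q :=
  (le_abs_self _).trans (abs_le_supNorm Q s a)

lemma supNorm_nonneg (Q : S → A → ℝ) : 0 ≤ supNorm Q :=
  (abs_nonneg _).trans (abs_le_supNorm Q (Classical.arbitrary S) (Classical.arbitrary A))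

lemma supNorm_le {Q : S → A → ℝ} {c : ℝ} (h : ∀ s a, |Q s a| ≤ c) : supNorm Q ≤ c :=
  sup'_le _ _ fun sa _ => h sa.1 sa.2

lemma supNorm_sub_comm (Q₁ Q₂ : S → A → ℝ) :
    supNorm (fun s a => Q₁ s a - Q₂ s a) = supNorm (fun s a => Q₂ s a - Q₁ s a) := by
  simp only [supNorm, abs_sub_comm]

end supNorm

section Bellman

variable (p : S → A → S → ℝ) (R : S → A → ℝ) (γ : ℝ)

lemma bellman_sub_bellman (π Q₁ Q₂ : S → A → ℝ) (s : S) (a : A) :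
    bellman p R γ π Q₁ s a - bellman p R γ π Q₂ s a
      = γ * ∑ s', p s a s' * ∑ a', π s' a' * (Q₁ s' a' - Q₂ s' a') := by
  simp only [bellman, mul_sub, sum_sub_distrib]
  ring

lemma bellman_mix_apply (ω : ℝ) (π π' Q : S → A → ℝ) (s : S) (a : A) :
    bellman p R γ (fun s a => (1 - ω) * π s a + ω * π' s a) Q s a
      = (1 - ω) * bellman p R γ π Q s a + ω * bellman p R γ π' Q s a := by
  have hsum : ∀ s', ∑ a', ((1 - ω) * π s' a' + ω * π' s' a') * Q s' a'
      = (1 - ω) * ∑ a', π s' a' * Q s' a' + ω * ∑ a', π' s' a' * Q s' a' := fun s' => by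
    simp only [mul_sum, ← sum_add_distrib, add_mul, mul_assoc]
  simp only [bellman, hsum, mul_add, sum_add_distrib, mul_left_comm _ (1 - ω), mul_left_comm _ ω,
    ← mul_sum]
  ring

variable {p γ}

lemma bellman_sub_bellman_le (hp : IsKernel p) (hγ : 0 ≤ γ) {π : S → A → ℝ} (hπ : IsPolicy π)
    {Q₁ Q₂ : S → A → ℝ} {c : ℝ}
    (h : ∀ s a, Q₁ s a - Q₂ s a ≤ c) (s : S) (a : A) :
    bellman p R γ π Q₁ s a - bellman p R γ π Q₂ s a ≤ γ * c := by
  rw [bellman_sub_bellman]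
  exact mul_le_mul_of_nonneg_left (sum_mul_le_of_forall_le (hp.1 s a) (hp.2 s a) fun s' =>
    sum_mul_le_of_forall_le (hπ.1 s') (hπ.2 s') (h s')) hγ

lemma le_bellman_sub_bellman (hp : IsKernel p) (hγ : 0 ≤ γ) {π : S → A → ℝ} (hπ : IsPolicy π)
    {Q₁ Q₂ : S → A → ℝ} {c : ℝ}
    (h : ∀ s a, c ≤ Q₁ s a - Q₂ s a) (s : S) (a : A) :
    γ * c ≤ bellman p R γ π Q₁ s a - bellman p R γ π Q₂ s a := by
  rw [bellman_sub_bellman]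
  exact mul_le_mul_of_nonneg_left (le_sum_mul_of_forall_le (hp.1 s a) (hp.2 s a) fun s' =>
    le_sum_mul_of_forall_le (hπ.1 s') (hπ.2 s') (h s')) hγ

variable [Nonempty A]

lemma bellmanOpt_sub_bellmanOpt_le (hp : IsKernel p) (hγ : 0 ≤ γ) {Q₁ Q₂ : S → A → ℝ} {c : ℝ}
    (h : ∀ s a, Q₁ s a - Q₂ s a ≤ c) (s : S) (a : A) :
    bellmanOpt p R γ Q₁ s a - bellmanOpt p R γ Q₂ s a ≤ γ * c := by
  have hmax : ∀ s', univ.sup' univ_nonempty (Q₁ s') - univ.sup' univ_nonempty (Q₂ s') ≤ c :=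
    fun s' => sub_le_iff_le_add.2 <| sup'_le _ _ fun a' _ => by
      linarith [h s' a', le_sup' (Q₂ s') (mem_univ a')]
  have hsum := sum_mul_le_of_forall_le (hp.1 s a) (hp.2 s a) hmax
  simp only [bellmanOpt, mul_sub, sum_sub_distrib] at hsum ⊢
  nlinarith

lemma bellman_le_bellmanOpt (hp : IsKernel p) (hγ : 0 ≤ γ) {π : S → A → ℝ} (hπ : IsPolicy π)
    (Q : S → A → ℝ) (s : S) (a : A) :
    bellman p R γ π Q s a ≤ bellmanOpt p R γ Q s a := by
  refine add_le_add_right (mul_le_mul_of_nonneg_left (sum_le_sum fun s' _ => ?_) hγ) _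
  exact mul_le_mul_of_nonneg_left (sum_mul_le_of_forall_le (hπ.1 s') (hπ.2 s')
    fun a' => le_sup' (Q s') (mem_univ a')) (hp.1 s a s')

variable [Nonempty S]

lemma bellmanOpt_le_bellman_add (hp : IsKernel p) (hγ : 0 ≤ γ) {π : S → A → ℝ} (hπ : IsPolicy π)
    (Q Q' : S → A → ℝ) (s : S) (a : A) :
    bellmanOpt p R γ Q' s a ≤ bellman p R γ π Q' s a
      + (2 * γ * supNorm (fun s a => Q s a - Q' s a)
        + supNorm (fun s a => bellmanOpt p R γ Q s a - bellman p R γ π Q s a)) := by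
  have hopt := bellmanOpt_sub_bellmanOpt_le R hp hγ
    (le_supNorm (fun s a => Q' s a - Q s a)) s a
  have hpol := bellman_sub_bellman_le R hp hγ hπ (le_supNorm (fun s a => Q s a - Q' s a)) s a
  have hres := le_supNorm (fun s a => bellmanOpt p R γ Q s a - bellman p R γ π Q s a) s a
  rw [supNorm_sub_comm] at hopt
  linarith

/-- Evaluate the hypothesis where `Q₁ - Q₂` is smallest, and use that `H_π` contracts from below
there. -/
lemma neg_div_le_sub_of_bellman_sub_le (hp : IsKernel p) (hγ : 0 ≤ γ) (hγ1 : γ < 1)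
    {π : S → A → ℝ} (hπ : IsPolicy π) {Q₁ Q₂ : S → A → ℝ} {β : ℝ}
    (h : ∀ s a, bellman p R γ π Q₁ s a - bellman p R γ π Q₂ s a - β ≤ Q₁ s a - Q₂ s a)
    (s : S) (a : A) : -β / (1 - γ) ≤ Q₁ s a - Q₂ s a := by
  obtain ⟨⟨s₀, a₀⟩, hmin⟩ := Finite.exists_min fun sa : S × A => Q₁ sa.1 sa.2 - Q₂ sa.1 sa.2
  have hγt := le_bellman_sub_bellman R hp hγ hπ (fun s a => hmin (s, a)) s₀ a₀
  rw [div_le_iff₀ (by linarith)]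
  nlinarith [h s₀ a₀, hmin (s, a)]

lemma isFixedPt_bellman_le (hp : IsKernel p) (hγ : 0 ≤ γ) (hγ1 : γ < 1) {π Qstar Qπ : S → A → ℝ}
    (hπ : IsPolicy π) (hQstar : IsFixedPt (bellmanOpt p R γ) Qstar)
    (hQπ : IsFixedPt (bellman p R γ π) Qπ)
    (s : S) (a : A) : Qπ s a ≤ Qstar s a := by
  have h : -0 / (1 - γ) ≤ Qstar s a - Qπ s a := by
    refine neg_div_le_sub_of_bellman_sub_le R hp hγ hγ1 hπ (fun s a => ?_) s a
    have := bellman_le_bellmanOpt R hp hγ hπ Qstar s a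
    rw [hQstar] at this
    rw [hQπ]
    linarith
  rw [neg_zero, zero_div] at h
  linarith

end Bellman

section Drift

variable [Nonempty S] [Nonempty A] {p : S → A → S → ℝ} {R : S → A → ℝ} {γ ω : ℝ}

theorem supNorm_sub_isFixedPt_bellman_mix_le (hp : IsKernel p) (hγ : 0 ≤ γ) (hγ1 : γ < 1)
    {π π' : S → A → ℝ} (hπ : IsPolicy π) (hπ' : IsPolicy π') (hω0 : 0 ≤ ω) (hω1 : ω ≤ 1)
    {Q Qstar Qπ Qmix : S → A → ℝ} (hQstar : IsFixedPt (bellmanOpt p R γ) Qstar)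
    (hQπ : IsFixedPt (bellman p R γ π) Qπ)
    (hQmix : IsFixedPt (bellman p R γ fun s a => (1 - ω) * π s a + ω * π' s a) Qmix) :
    supNorm (fun s a => Qstar s a - Qmix s a)
      ≤ (1 - ω * (1 - γ)) * supNorm (fun s a => Qstar s a - Qπ s a)
        + ω * (2 * γ * supNorm (fun s a => Q s a - Qπ s a)
          + supNorm (fun s a => bellmanOpt p R γ Q s a - bellman p R γ π' Q s a)) / (1 - γ) := by
  set πmix := fun s a => (1 - ω) * π s a + ω * π' s a
  have hπmix : IsPolicy πmix := hπ.mix hπ' hω0 hω1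
  set D := supNorm (fun s a => Qstar s a - Qπ s a)
  set κ := 2 * γ * supNorm (fun s a => Q s a - Qπ s a)
    + supNorm (fun s a => bellmanOpt p R γ Q s a - bellman p R γ π' Q s a)
  have hκ : 0 ≤ κ :=
    add_nonneg (mul_nonneg (by positivity) (supNorm_nonneg _)) (supNorm_nonneg _)
  have hgap : ∀ s a, Qstar s a - Qπ s a - γ * D ≤ bellmanOpt p R γ Qπ s a - Qπ s a := by
    intro s a
    have := bellmanOpt_sub_bellmanOpt_le R hp hγ (le_supNorm fun s a => Qstar s a - Qπ s a) s a
    rw [hQstar] at this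
    linarith
  have hgreedy : ∀ s a, Qπ s a ≤ bellmanOpt p R γ Qπ s a := fun s a => by
    have := bellman_le_bellmanOpt R hp hγ hπ Qπ s a
    rwa [hQπ] at this
  have hΔ : ∀ s a, bellman p R γ πmix Qmix s a - bellman p R γ πmix Qπ s a
      + ω * (bellmanOpt p R γ Qπ s a - Qπ s a - κ) ≤ Qmix s a - Qπ s a := fun s a => by
    have hmix := bellman_mix_apply p R γ ω π π' Qπ s a
    have hclose := bellmanOpt_le_bellman_add R hp hγ hπ' Q Qπ s a
    rw [hQπ] at hmix
    rw [hQmix]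
    linarith [mul_le_mul_of_nonneg_left hclose hω0]
  have hlow : ∀ s a, -(ω * κ) / (1 - γ) ≤ Qmix s a - Qπ s a := by
    refine neg_div_le_sub_of_bellman_sub_le R hp hγ hγ1 hπmix fun s a => ?_
    linarith [hΔ s a, mul_nonneg hω0 (sub_nonneg.2 (hgreedy s a))]
  refine supNorm_le fun s a => abs_le.2 ⟨?_, ?_⟩
  · have hcoef : 0 ≤ 1 - ω * (1 - γ) := by nlinarith
    have hD : 0 ≤ D := supNorm_nonneg _
    have hdrift : 0 ≤ ω * κ / (1 - γ) := div_nonneg (mul_nonneg hω0 hκ) (by linarith)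
    linarith [isFixedPt_bellman_le R hp hγ hγ1 hπmix hQstar hQmix s a, mul_nonneg hcoef hD]
  · have hγlow := le_bellman_sub_bellman R hp hγ hπmix hlow s a
    have hdist := le_supNorm (fun s a => Qstar s a - Qπ s a) s a
    have hsplit : γ * (-(ω * κ) / (1 - γ)) - ω * κ = -(ω * κ / (1 - γ)) := by
      field_simp [(by linarith : 1 - γ ≠ 0)]
      ring
    linarith [hΔ s a, mul_le_mul_of_nonneg_left (hgap s a) hω0,
      mul_le_mul_of_nonneg_left hdist (sub_nonneg.2 hω1)]

end Drift

end MDP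

theorem actor_drift_squared_general {S A : Type*} [Fintype S] [Fintype A] [Nonempty S] [Nonempty A]
    (p : S → A → S → ℝ) (hp : IsKernel p)
    (R : S → A → ℝ)
    (γ : ℝ) (hγ : 0 < γ ∧ γ < 1)
    (π πt : S → A → ℝ) (hπ : IsPolicy π) (hπt : IsPolicy πt)
    (ω : ℝ) (hω : 0 ≤ ω ∧ ω ≤ 1)
    (Q Qstar Qpi Qpi' : S → A → ℝ)
    (hQstar : bellmanOpt p R γ Qstar = Qstar)
    (hQpi : bellman p R γ π Qpi = Qpi)
    (hQpi' : bellman p R γ (fun s a => (1 - ω) * π s a + ω * πt s a) Qpi' = Qpi')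
    (χ : ℝ)
    (hχ : χ = supNorm (fun s a => bellmanOpt p R γ Q s a - bellman p R γ πt Q s a)) :
    supNorm (fun s a => Qstar s a - Qpi' s a) ^ 2
      ≤ (1 - ω * (1 - γ)) * supNorm (fun s a => Qstar s a - Qpi s a) ^ 2
        + (6 * ω / (1 - γ) ^ 3) * supNorm (fun s a => Q s a - Qpi s a) ^ 2
        + (5 * ω / (1 - γ) ^ 3) * χ ^ 2 := by
  obtain ⟨hγ0, hγ1⟩ := hγ
  obtain ⟨hω0, hω1⟩ := hω
  subst hχ
  have hlinear := supNorm_sub_isFixedPt_bellman_mix_le (Q := Q) hp hγ0.le hγ1 hπ hπt hω0 hω1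
    hQstar hQpi hQpi'
  calc supNorm (fun s a => Qstar s a - Qpi' s a) ^ 2
      ≤ _ := pow_le_pow_left₀ (supNorm_nonneg _) hlinear 2
    _ ≤ _ := sq_drift_bound_le hγ0.le hγ1 hω0 hω1 (supNorm_nonneg _) (supNorm_nonneg _)

/-- Squared actor drift inequality (Corollary A.2). -/
theorem actor_drift_squared {S A : Type*} [Fintype S] [Fintype A] [Nonempty S] [Nonempty A]
    (p : S → A → S → ℝ) (hp : IsKernel p)
    (R : S → A → ℝ) (hR : ∀ s a, 0 ≤ R s a ∧ R s a ≤ 1)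
    (γ : ℝ) (hγ : 0 < γ ∧ γ < 1)
    (π πt : S → A → ℝ) (hπ : IsPolicy π) (hπt : IsPolicy πt)
    (ω : ℝ) (hω : 0 ≤ ω ∧ ω ≤ 1)
    (Q Qstar Qpi Qpi' : S → A → ℝ)
    (hQstar : bellmanOpt p R γ Qstar = Qstar)
    (hQpi : bellman p R γ π Qpi = Qpi)
    (hQpi' : bellman p R γ (fun s a => (1 - ω) * π s a + ω * πt s a) Qpi' = Qpi')
    (χ : ℝ)
    (hχ : χ = supNorm (fun s a => bellmanOpt p R γ Q s a - bellman p R γ πt Q s a)) :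
    supNorm (fun s a => Qstar s a - Qpi' s a) ^ 2
      ≤ (1 - ω * (1 - γ)) * supNorm (fun s a => Qstar s a - Qpi s a) ^ 2
        + (6 * ω / (1 - γ) ^ 3) * supNorm (fun s a => Q s a - Qpi s a) ^ 2
        + (5 * ω / (1 - γ) ^ 3) * χ ^ 2 :=
  actor_drift_squared_general p hp R γ hγ π πt hπ hπt ω hω Q Qstar Qpi Qpi' hQstar hQpi hQpi' χ hχ
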